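/- Cantor normal forms admit Euclidean division: for all CNFs a and b with b > 0, there exist CNFs c and d such that a = b · c + d and d < b. -/

import Mathlib

/-- Unlabelled binary trees. -/
inductive T : Type
  | zero : T
  | node : T → T → T

/-- The hereditary lexicographical order on binary trees. -/
inductive tlt : T → T → Prop
  | z {a b : T} : tlt T.zero (T.node a b)
  | l {a b c d : T} : tlt a c → tlt (T.node a b) (T.node c d)
  | r {a b d : T} : tlt b d → tlt (T.node a b) (T.node a d)

/-- The reflexive closure of `tlt`. -/
def tle (s t : T) : Prop := tlt s t ∨ s = t

/-- The left subtree, if it exists. -/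
def left : T → T
  | T.zero => T.zero
  | T.node a _ => a

/-- The Cantor normal form predicate. -/
inductive isCNF : T → Prop
  | z : isCNF T.zero
  | n {s t : T} : isCNF s → isCNF t → tle (left t) s → isCNF (T.node s t)

open Classical in
/-- Addition of Cantor normal forms. -/
noncomputable def tadd : T → T → T
  | T.zero, b => b
  | a, T.zero => a
  | T.node a c, T.node b d =>
      if tlt a b then T.node b d else T.node a (tadd c (T.node b d))

open Classical in
/-- Multiplication of Cantor normal forms. -/
noncomputable def tmul : T → T → T
  | _, T.zero => T.zero
  | T.zero, _ => T.zero
  | T.node a c, T.node T.zero d => tadd (T.node a c) (tmul (T.node a c) d)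
  | T.node a c, T.node b d =>
      tadd (T.node (tadd a b) T.zero) (tmul (T.node a c) d)

/-!
Reading a tree `⟨a, b⟩` as the ordinal `ω ^ a + b` maps CNFs order-isomorphically onto an
initial segment of the ordinals and turns `tadd` and `tmul` into ordinal addition and
multiplication.
Euclidean division of CNFs is then pulled back from that of ordinals.
-/

open Ordinal

theorem tlt_trans {a b c : T} (hab : tlt a b) (hbc : tlt b c) : tlt a c := by
  induction hab generalizing c with
  | z => cases hbc <;> exact tlt.z
  | l hac ih => cases hbc with
    | l h => exact tlt.l (ih h)
    | r => exact tlt.l hac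
  | r _ ih => cases hbc with
    | l h => exact tlt.l h
    | r h => exact tlt.r (ih h)

theorem tlt_trichotomy : ∀ s t : T, tlt s t ∨ s = t ∨ tlt t s
  | T.zero, T.zero => Or.inr (Or.inl rfl)
  | T.zero, T.node _ _ => Or.inl tlt.z
  | T.node _ _, T.zero => Or.inr (Or.inr tlt.z)
  | T.node a b, T.node c d => by
    rcases tlt_trichotomy a c with h | rfl | h
    · exact Or.inl (tlt.l h)
    · rcases tlt_trichotomy b d with h | rfl | h
      · exact Or.inl (tlt.r h)
      · exact Or.inr (Or.inl rfl)
      · exact Or.inr (Or.inr (tlt.r h))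
    · exact Or.inr (Or.inr (tlt.l h))

theorem tle_of_not_tlt {s t : T} (h : ¬ tlt t s) : tle s t := by
  rcases tlt_trichotomy s t with h' | rfl | h'
  · exact Or.inl h'
  · exact Or.inr rfl
  · exact absurd h' h

theorem zero_tle (t : T) : tle T.zero t := by
  cases t with
  | zero => exact Or.inr rfl
  | node => exact Or.inl tlt.z

namespace isCNF

variable {s t : T}

theorem fst (h : isCNF (T.node s t)) : isCNF s := by cases h; assumption

theorem snd (h : isCNF (T.node s t)) : isCNF t := by cases h; assumption

theorem left_tle (h : isCNF (T.node s t)) : tle (left t) s := by cases h; assumption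

theorem left (h : isCNF t) : isCNF (_root_.left t) := by
  cases t with
  | zero => exact isCNF.z
  | node => exact h.fst

theorem monomial (h : isCNF s) : isCNF (T.node s T.zero) := isCNF.n h isCNF.z (zero_tle s)

end isCNF

/-- An ordinal `x` with leading term `ω ^ a` is absorbed by `ω ^ b` with `b ≠ 0`:
it lies below `ω ^ a * n` for some `n < ω`, and `n * ω ^ b = ω ^ b`. -/
theorem Ordinal.mul_omega0_opow_of_le_of_lt {x a b : Ordinal} (h₁ : ω ^ a ≤ x)
    (h₂ : x < ω ^ (a + 1)) (hb : b ≠ 0) : x * ω ^ b = ω ^ (a + b) := by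
  obtain ⟨n, hn⟩ := lt_omega0_opow_succ.1 h₂
  have hn0 : (0 : Ordinal) < n := Nat.cast_pos'.2 (Nat.pos_of_ne_zero (by rintro rfl; simp at hn))
  have hnb : (n : Ordinal) * ω ^ b = ω ^ b :=
    mul_omega0_dvd hn0 (natCast_lt_omega0 n) <| by
      simpa using opow_dvd_opow ω (Order.one_le_iff_ne_zero.2 hb)
  apply le_antisymm
  · calc x * ω ^ b ≤ ω ^ a * n * ω ^ b := mul_le_mul_left hn.le _
      _ = ω ^ (a + b) := by rw [mul_assoc, hnb, opow_add]
  · rw [opow_add]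
    exact mul_le_mul_left h₁ _

namespace T

noncomputable def eval : T → Ordinal.{0}
  | zero => 0
  | node a b => ω ^ eval a + eval b

@[simp] theorem eval_zero : eval zero = 0 := rfl

@[simp] theorem eval_node (a b : T) : eval (node a b) = ω ^ eval a + eval b := rfl

theorem eval_node_ne_zero (a b : T) : eval (node a b) ≠ 0 :=
  (opow_pos _ omega0_pos).trans_le le_self_add |>.ne'

/-- For `⟨a, b⟩ < ⟨c, d⟩` with `a < c`, the CNF condition gives `b < ⟨c, 0⟩`, so the whole of
`⟨a, b⟩` is absorbed below the principal ordinal `ω ^ c`. -/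
theorem eval_lt_eval_of_tlt {s t : T} (hs : isCNF s) (ht : isCNF t) (h : tlt s t) :
    eval s < eval t := by
  induction s generalizing t with
  | zero => cases h; exact pos_iff_ne_zero.2 (eval_node_ne_zero _ _)
  | node a b iha ihb =>
    cases h with
    | @l _ _ c d hac =>
      have hb : tlt b (node c zero) := by
        cases b with
        | zero => exact tlt.z
        | node b₁ b₂ =>
          rcases hs.left_tle with hb₁ | rfl
          · exact tlt.l (tlt_trans hb₁ hac)
          · exact tlt.l hac
      have hb' : eval b < ω ^ eval c := by
        simpa using ihb hs.snd ht.fst.monomial hb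
      have ha' : ω ^ eval a < ω ^ eval c :=
        (opow_lt_opow_iff_right one_lt_omega0).2 (iha hs.fst ht.fst hac)
      calc eval (node a b) < ω ^ eval c := isPrincipal_add_omega0_opow _ ha' hb'
        _ ≤ eval (node c d) := le_self_add
    | r hbd => exact add_lt_add_right (ihb hs.snd ht.snd hbd) _

theorem eval_le_eval_of_tle {s t : T} (hs : isCNF s) (ht : isCNF t) (h : tle s t) :
    eval s ≤ eval t := by
  rcases h with h | rfl
  · exact (eval_lt_eval_of_tlt hs ht h).le
  · exact le_rfl

theorem tlt_of_eval_lt_eval {s t : T} (hs : isCNF s) (ht : isCNF t) (h : eval s < eval t) :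
    tlt s t := by
  rcases tlt_trichotomy s t with h' | rfl | h'
  · exact h'
  · exact absurd h (lt_irrefl _)
  · exact absurd (eval_lt_eval_of_tlt ht hs h') h.not_gt

theorem eq_of_eval_eq {s t : T} (hs : isCNF s) (ht : isCNF t) (h : eval s = eval t) : s = t := by
  rcases tlt_trichotomy s t with h' | h' | h'
  · exact absurd h (eval_lt_eval_of_tlt hs ht h').ne
  · exact h'
  · exact absurd h (eval_lt_eval_of_tlt ht hs h').ne'

theorem eval_lt_opow_succ_eval_left {t : T} (h : isCNF t) :
    eval t < ω ^ (eval (left t) + 1) := by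
  induction h with
  | z => exact opow_pos _ omega0_pos
  | @n s t hs ht hle _ iht =>
    have ht' : eval t < ω ^ (eval s + 1) :=
      iht.trans_le <| opow_le_opow_right omega0_pos <|
        add_le_add_left (eval_le_eval_of_tle ht.left hs hle) 1
    have hs' : ω ^ eval s < ω ^ (eval s + 1) :=
      (opow_lt_opow_iff_right one_lt_omega0).2 (Order.lt_add_one_iff.2 le_rfl)
    exact isPrincipal_add_omega0_opow _ hs' ht'

end T

open T

@[simp] theorem tadd_zero_left (b : T) : tadd T.zero b = b := by cases b <;> rfl

@[simp] theorem tadd_zero_right (a : T) : tadd a T.zero = a := by cases a <;> rfl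

theorem tadd_node_of_tlt {a b : T} (c d : T) (h : tlt a b) :
    tadd (T.node a c) (T.node b d) = T.node b d := by
  rw [tadd, if_pos h]

theorem tadd_node_of_not_tlt {a b : T} (c d : T) (h : ¬ tlt a b) :
    tadd (T.node a c) (T.node b d) = T.node a (tadd c (T.node b d)) := by
  rw [tadd, if_neg h]

theorem isCNF_tadd {a b : T} (ha : isCNF a) (hb : isCNF b) : isCNF (tadd a b) := by
  induction a with
  | zero => simpa
  | node a c _ ihc =>
    cases b with
    | zero => simpa
    | node b d =>
      by_cases h : tlt a b
      · rwa [tadd_node_of_tlt _ _ h]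
      · rw [tadd_node_of_not_tlt _ _ h]
        refine isCNF.n ha.fst (ihc ha.snd) ?_
        cases c with
        | zero => exact tle_of_not_tlt h
        | node c₁ c₂ =>
          by_cases h' : tlt c₁ b
          · rw [tadd_node_of_tlt _ _ h']; exact tle_of_not_tlt h
          · rw [tadd_node_of_not_tlt _ _ h']; exact ha.left_tle

theorem eval_tadd {a b : T} (ha : isCNF a) (hb : isCNF b) : eval (tadd a b) = eval a + eval b := by
  induction a with
  | zero => simp
  | node a c _ ihc =>
    cases b with
    | zero => simp
    | node b d =>
      by_cases h : tlt a b
      · rw [tadd_node_of_tlt _ _ h]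
        have hlt : eval (T.node a c) < ω ^ eval b := by
          simpa using eval_lt_eval_of_tlt ha hb.fst.monomial (tlt.l h)
        exact (add_of_omega0_opow_le hlt le_self_add).symm
      · rw [tadd_node_of_not_tlt _ _ h, eval_node, eval_node, ihc ha.snd, add_assoc]

@[simp] theorem tmul_zero_right (a : T) : tmul a T.zero = T.zero := by cases a <;> rfl

@[simp] theorem tmul_zero_left (b : T) : tmul T.zero b = T.zero := by cases b <;> rfl

theorem tmul_node_node_zero (a c d : T) :
    tmul (T.node a c) (T.node T.zero d) = tadd (T.node a c) (tmul (T.node a c) d) := by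
  rw [tmul]

theorem tmul_node_node {b : T} (a c d : T) (hb : b ≠ T.zero) :
    tmul (T.node a c) (T.node b d) = tadd (T.node (tadd a b) T.zero) (tmul (T.node a c) d) := by
  rw [tmul]; exact hb

theorem isCNF_tmul {a b : T} (ha : isCNF a) (hb : isCNF b) : isCNF (tmul a b) := by
  induction b with
  | zero => simpa using isCNF.z
  | node b d _ ihd =>
    cases a with
    | zero => simpa using isCNF.z
    | node a c =>
      by_cases hb0 : b = T.zero
      · subst hb0
        rw [tmul_node_node_zero]
        exact isCNF_tadd ha (ihd hb.snd)
      · rw [tmul_node_node _ _ _ hb0]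
        exact isCNF_tadd (isCNF_tadd ha.fst hb.fst).monomial (ihd hb.snd)

theorem eval_tmul {a b : T} (ha : isCNF a) (hb : isCNF b) : eval (tmul a b) = eval a * eval b := by
  induction b with
  | zero => simp
  | node b d _ ihd =>
    cases a with
    | zero => simp
    | node a c =>
      by_cases hb0 : b = T.zero
      · subst hb0
        rw [tmul_node_node_zero, eval_tadd ha (isCNF_tmul ha hb.snd), ihd hb.snd, eval_node _ d,
          eval_zero, opow_zero, mul_one_add]
      · have hx : eval (T.node a c) * ω ^ eval b = ω ^ (eval a + eval b) :=
          Ordinal.mul_omega0_opow_of_le_of_lt le_self_add (eval_lt_opow_succ_eval_left ha)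
            fun h => hb0 (eq_of_eval_eq hb.fst isCNF.z h)
        rw [tmul_node_node _ _ _ hb0, eval_tadd (isCNF_tadd ha.fst hb.fst).monomial
          (isCNF_tmul ha hb.snd), ihd hb.snd, eval_node, eval_zero, add_zero,
          eval_tadd ha.fst hb.fst, eval_node _ d, mul_add, hx]

theorem isCNF_iterate_node {e r : T} (he : isCNF e) (hr : isCNF r) (hle : tle (left r) e)
    (n : ℕ) :
    isCNF ((T.node e)^[n] r) := by
  induction n generalizing r with
  | zero => exact hr
  | succ n ih => exact ih (isCNF.n he hr hle) (Or.inr rfl)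

theorem eval_iterate_node (e r : T) (n : ℕ) :
    eval ((T.node e)^[n] r) = ω ^ eval e * n + eval r := by
  induction n generalizing r with
  | zero => simp
  | succ n ih =>
    rw [Function.iterate_succ_apply, ih, eval_node, Nat.cast_succ, mul_add_one, add_assoc]

theorem tle_left_of_eval_lt_opow {e r : T} (he : isCNF e) (hr : isCNF r)
    (h : eval r < ω ^ eval e) : tle (left r) e := by
  cases r with
  | zero => exact zero_tle e
  | node u v =>
    refine Or.inl (tlt_of_eval_lt_eval hr.fst he ?_)
    exact (opow_lt_opow_iff_right one_lt_omega0).1 (lt_of_le_of_lt le_self_add h)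

/-- The ordinals denoted by CNFs form an initial segment: `o` is built from its Cantor normal
form `ω ^ e * n + o % ω ^ e`, with `e ≤ eval (left a)` handled by induction on `a` and the
remainder by induction on `o`. -/
theorem exists_eval_eq_of_le {a : T} (ha : isCNF a) :
    ∀ o ≤ eval a, ∃ s, isCNF s ∧ eval s = o := by
  induction a with
  | zero =>
    intro o ho
    exact ⟨T.zero, isCNF.z, (nonpos_iff_eq_zero.1 ho).symm⟩
  | node a₁ a₂ ih₁ _ =>
    intro o
    induction o using WellFoundedLT.induction with
    | _ o ih =>
    intro ho
    rcases eq_or_ne o 0 with rfl | ho0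
    · exact ⟨T.zero, isCNF.z, rfl⟩
    have hlog : log ω o ≤ eval a₁ := by
      rw [← Order.lt_add_one_iff, ← lt_opow_iff_log_lt one_lt_omega0 ho0]
      exact ho.trans_lt (eval_lt_opow_succ_eval_left ha)
    obtain ⟨e, he, hee⟩ := ih₁ ha.fst _ hlog
    have hmod := mod_opow_log_lt_self ω ho0
    obtain ⟨r, hr, hre⟩ := ih _ hmod (hmod.le.trans ho)
    obtain ⟨n, hn⟩ := lt_omega0.1 (div_opow_log_lt o one_lt_omega0)
    have hrlt : eval r < ω ^ eval e := by
      rw [hre, hee]; exact mod_lt _ (opow_pos _ omega0_pos).ne'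
    refine ⟨(T.node e)^[n] r,
      isCNF_iterate_node he hr (tle_left_of_eval_lt_opow he hr hrlt) n, ?_⟩
    rw [eval_iterate_node, hee, hre, ← hn, div_add_mod]

/-- CNFs admit Euclidean division. -/
theorem cnf_division :
    ∀ a b : T, isCNF a → isCNF b → tlt T.zero b →
      ∃ c d : T, isCNF c ∧ isCNF d ∧ a = tadd (tmul b c) d ∧ tlt d b := by
  intro a b ha hb hpos
  have hb0 : eval b ≠ 0 := by simpa using (eval_lt_eval_of_tlt isCNF.z hb hpos).ne'
  obtain ⟨c, hc, hce⟩ := exists_eval_eq_of_le ha (eval a / eval b)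
    (div_le_of_le_mul (le_mul_right _ (pos_iff_ne_zero.2 hb0)))
  obtain ⟨d, hd, hde⟩ := exists_eval_eq_of_le hb (eval a % eval b) (mod_lt _ hb0).le
  have hcd := isCNF_tadd (isCNF_tmul hb hc) hd
  refine ⟨c, d, hc, hd, eq_of_eval_eq ha hcd ?_,
    tlt_of_eval_lt_eval hd hb (hde ▸ mod_lt _ hb0)⟩
  rw [eval_tadd (isCNF_tmul hb hc) hd, eval_tmul hb hc, hce, hde, div_add_mod]
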